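/- arXiv:2212.10963 — 8 statements merged into one kernel-verified Lean document; each statement's English description precedes it below -/
import Mathlib

section
/- For natural numbers n and t with 1 ≤ t ≤ n and n a power of two, the quantity t*(⌈log₂ n⌉ - ⌈log₂ t⌉) + 2^⌈log₂ t⌉ - t is at most ⌈n/2⌉. -/
theorem arbitrary_bound_le_half (n t : ℕ) (hpow : ∃ k, n = 2 ^ k)
    (ht : 1 ≤ t) (htn : t ≤ n) :
    t * (Nat.clog 2 n - Nat.clog 2 t) + 2 ^ Nat.clog 2 t - t ≤ (n + 1) / 2 := by
  obtain ⟨k, rfl⟩ := hpow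
  rw [Nat.clog_pow 2 k (by norm_num)]
  set c := Nat.clog 2 t with hc
  have hcle : c ≤ k := by
    rw [hc, ← Nat.clog_pow 2 k (by norm_num)]
    exact Nat.clog_mono_right 2 htn
  have htc : t ≤ 2 ^ c := Nat.le_pow_clog (by norm_num) t
  rcases Nat.eq_or_lt_of_le hcle with heq | hlt
  · -- c = k
    subst heq
    rcases Nat.eq_or_lt_of_le ht with h1 | h2
    · -- t = 1
      have hc0 : c = 0 := by rw [hc, ← h1, Nat.clog_one_right]
      simp [← h1, hc0]
    · have hlt2 : 2 ^ (c - 1) < t := Nat.pow_pred_clog_lt_self (by norm_num) h2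
      have hc1 : 1 ≤ c := Nat.clog_pos (by norm_num) h2
      have h2c : 2 ^ c = 2 * 2 ^ (c - 1) := by
        rw [← pow_succ']
        congr 1
        omega
      simp only [Nat.sub_self, Nat.mul_zero, Nat.zero_add]
      omega
  · -- c < k
    set m := k - c with hm
    have hm1 : 1 ≤ m := by omega
    have hmle : m ≤ 2 ^ (m - 1) := by
      have := Nat.lt_two_pow_self (n := m - 1)
      omega
    have hkc : 2 ^ k = 2 ^ c * 2 ^ (m - 1) * 2 := by
      rw [mul_assoc, ← pow_succ, ← pow_add]
      congr 1
      omega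
    have key : t * m + 2 ^ c - t ≤ 2 ^ c * 2 ^ (m - 1) := by
      have h1 : t * m + 2 ^ c - t = t * (m - 1) + 2 ^ c := by
        have : t * m = t * (m - 1) + t := by
          nth_rewrite 1 [show m = (m - 1) + 1 from by omega]
          rw [mul_add, mul_one]
        omega
      rw [h1]
      calc t * (m - 1) + 2 ^ c ≤ 2 ^ c * (m - 1) + 2 ^ c :=
            Nat.add_le_add_right (Nat.mul_le_mul_right _ htc) _
        _ = 2 ^ c * m := by
            rw [← Nat.mul_succ]
            congr 1
            omega
        _ ≤ 2 ^ c * 2 ^ (m - 1) := Nat.mul_le_mul_left _ hmle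
    omega
end

section
/- For a message of n > 2 tokens whose Merkle tree has height ⌈log₂ n⌉, the worst-case number of hashes on the verification path of any contiguous quote is at most 2*⌈log₂ n⌉ - 2. -/
/-- The set of leaf positions (in a full binary tree of height `h`) below the `i`-th node
at depth `d`. -/
def leafSet (h d i : ℕ) : Finset ℕ :=
  Finset.Ico (i * 2 ^ (h - d)) ((i + 1) * 2 ^ (h - d))

/-- The verification path for a quoted leaf set `S` in a heap-shaped binary tree on `n`
leaves (height `⌈log₂ n⌉`): nodes present in the heap-shaped tree whose subtree misses `S`
but whose sibling's subtree meets `S`. -/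
def heapVerPath (n : ℕ) (S : Finset ℕ) : Finset (ℕ × ℕ) :=
  (Finset.Icc 1 (Nat.clog 2 n) ×ˢ Finset.range (2 ^ Nat.clog 2 n)).filter
    (fun p => p.2 < 2 ^ p.1 ∧
      (leafSet (Nat.clog 2 n) p.1 p.2 ∩ Finset.range n).Nonempty ∧
      leafSet (Nat.clog 2 n) p.1 p.2 ∩ S = ∅ ∧
      (leafSet (Nat.clog 2 n) p.1 (p.2 ^^^ 1) ∩ S).Nonempty)

private lemma xordiv (i : ℕ) : (i ^^^ 1) / 2 = i / 2 := by
  apply Nat.eq_of_testBit_eq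
  intro k
  rw [Nat.testBit_div_two, Nat.testBit_div_two, Nat.testBit_xor]
  have : Nat.testBit 1 (k+1) = false := by
    rw [Nat.testBit_succ]; simp
  simp [this]

private lemma xor1_even (i : ℕ) (h : i % 2 = 0) : i ^^^ 1 = i + 1 := by
  have h1 := xordiv i
  have h2 : (i ^^^ 1) % 2 = (i + 1) % 2 := by rw [Nat.xor_mod_two_eq]
  omega

private lemma xor1_odd (i : ℕ) (h : i % 2 = 1) : i ^^^ 1 = i - 1 := by
  have h1 := xordiv i
  have h2 : (i ^^^ 1) % 2 = (i + 1) % 2 := by rw [Nat.xor_mod_two_eq]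
  omega

/-- A node on the verification path at depth `d` is the sibling of a boundary node. -/
private lemma mem_cover (h a b : ℕ) (hab : a ≤ b) {d i : ℕ}
    (hC2 : leafSet h d i ∩ Finset.Icc a b = ∅)
    (hC3 : (leafSet h d (i ^^^ 1) ∩ Finset.Icc a b).Nonempty) :
    (Odd (a / 2 ^ (h - d)) ∧ i = (a / 2 ^ (h - d)) ^^^ 1) ∨
    (Even (b / 2 ^ (h - d)) ∧ i = (b / 2 ^ (h - d)) ^^^ 1) := by
  obtain ⟨x, hx⟩ := hC3
  simp only [leafSet, Finset.mem_inter, Finset.mem_Ico, Finset.mem_Icc] at hx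
  obtain ⟨⟨hx1, hx2⟩, hxa, hxb⟩ := hx
  have hk : 0 < 2 ^ (h - d) := Nat.pow_pos (by norm_num)
  have hxeq : x / 2 ^ (h - d) = i ^^^ 1 := Nat.div_eq_of_lt_le hx1 hx2
  have hAle : a / 2 ^ (h - d) ≤ i ^^^ 1 := hxeq ▸ Nat.div_le_div_right hxa
  have hBge : i ^^^ 1 ≤ b / 2 ^ (h - d) := hxeq ▸ Nat.div_le_div_right hxb
  have hnot : ¬ (a / 2 ^ (h - d) ≤ i ∧ i ≤ b / 2 ^ (h - d)) := by
    rintro ⟨hai, hib⟩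
    have hmem : max a (i * 2 ^ (h - d)) ∈ leafSet h d i ∩ Finset.Icc a b := by
      simp only [leafSet, Finset.mem_inter, Finset.mem_Ico, Finset.mem_Icc]
      refine ⟨⟨le_max_right _ _, max_lt ?_ ?_⟩, le_max_left _ _, max_le hab ?_⟩
      · exact (Nat.div_lt_iff_lt_mul hk).mp (Nat.lt_succ_of_le hai)
      · exact mul_lt_mul_of_pos_right (Nat.lt_succ_self i) hk
      · exact (Nat.le_div_iff_mul_le hk).mp hib
    rw [hC2] at hmem
    exact Finset.notMem_empty _ hmem
  rcases Nat.even_or_odd i with hev | hod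
  · left
    have he := Nat.even_iff.mp hev
    rw [xor1_even i he] at hAle hBge
    have hAeq : a / 2 ^ (h - d) = i + 1 := by omega
    rw [hAeq]
    refine ⟨Nat.odd_iff.mpr (by omega), ?_⟩
    rw [xor1_odd (i+1) (by omega)]
    omega
  · right
    have ho := Nat.odd_iff.mp hod
    rw [xor1_odd i ho] at hAle hBge
    have hBeq : b / 2 ^ (h - d) = i - 1 := by omega
    rw [hBeq]
    refine ⟨Nat.even_iff.mpr (by omega), ?_⟩
    rw [xor1_even (i-1) (by omega)]
    omega

private lemma count_bound (h a b : ℕ) (hh2 : 2 ≤ h) (hab : a ≤ b) (hb2 : b < 2 ^ h) :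
    ((Finset.Icc 1 h).filter (fun d => Odd (a / 2 ^ (h - d)))).card +
    ((Finset.Icc 1 h).filter (fun d => Even (b / 2 ^ (h - d)))).card ≤ 2 * h - 2 := by
  rcases eq_or_lt_of_le hab with rfl | hlt
  · have hpart := Finset.card_filter_add_card_filter_not (s := Finset.Icc 1 h)
      (p := fun d => Odd (a / 2 ^ (h - d)))
    have hcong : (Finset.Icc 1 h).filter (fun d => Even (a / 2 ^ (h - d))) =
        (Finset.Icc 1 h).filter (fun d => ¬ Odd (a / 2 ^ (h - d))) := by
      apply Finset.filter_congr; intro d _; exact (Nat.not_odd_iff_even).symm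
    rw [hcong]
    rw [Nat.card_Icc] at hpart
    omega
  · have hexh : a / 2 ^ (h - h) ≠ b / 2 ^ (h - h) := by
      simpa using hlt.ne
    have hex : ∃ d, a / 2 ^ (h - d) ≠ b / 2 ^ (h - d) := ⟨h, hexh⟩
    set t := Nat.find hex with htdef
    have ht : a / 2 ^ (h - t) ≠ b / 2 ^ (h - t) := Nat.find_spec hex
    have hth : t ≤ h := Nat.find_le hexh
    have ht1 : 1 ≤ t := by
      rcases Nat.eq_zero_or_pos t with h0 | h1
      · exfalso
        apply ht
        rw [h0, Nat.sub_zero, Nat.div_eq_of_lt (lt_of_le_of_lt hab hb2), Nat.div_eq_of_lt hb2]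
      · exact h1
    have hprev : a / 2 ^ (h - (t-1)) = b / 2 ^ (h - (t-1)) := by
      by_contra hc
      exact Nat.find_min hex (show t - 1 < t by omega) hc
    have hdivA : a / 2 ^ (h - t) / 2 = a / 2 ^ (h - (t - 1)) := by
      rw [Nat.div_div_eq_div_mul, ← pow_succ]
      congr 2
      omega
    have hdivB : b / 2 ^ (h - t) / 2 = b / 2 ^ (h - (t - 1)) := by
      rw [Nat.div_div_eq_div_mul, ← pow_succ]
      congr 2
      omega
    have hab_t : a / 2 ^ (h - t) ≤ b / 2 ^ (h - t) := Nat.div_le_div_right hab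
    have hAt : (a / 2 ^ (h - t)) % 2 = 0 ∧ (b / 2 ^ (h - t)) % 2 = 1 := by
      omega
    have hU : ((Finset.Icc 1 h).filter (fun d => Odd (a / 2 ^ (h - d))) ∪
              (Finset.Icc 1 h).filter (fun d => Even (b / 2 ^ (h - d)))) ⊆
              (Finset.Icc 1 h).erase t := by
      intro d hd
      rcases Finset.mem_union.mp hd with hd | hd <;>
        simp only [Finset.mem_filter, Finset.mem_Icc] at hd <;>
        refine Finset.mem_erase.mpr ⟨?_, Finset.mem_Icc.mpr hd.1⟩
      · rintro rfl
        rw [Nat.odd_iff] at hd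
        omega
      · rintro rfl
        rw [Nat.even_iff] at hd
        omega
    have hI : ((Finset.Icc 1 h).filter (fun d => Odd (a / 2 ^ (h - d))) ∩
              (Finset.Icc 1 h).filter (fun d => Even (b / 2 ^ (h - d)))) ⊆
              Finset.Ioc t h := by
      intro d hd
      simp only [Finset.mem_inter, Finset.mem_filter, Finset.mem_Icc] at hd
      obtain ⟨⟨⟨hd1, hdh⟩, hodd⟩, ⟨-, heven⟩⟩ := hd
      rw [Finset.mem_Ioc]
      refine ⟨?_, hdh⟩
      by_contra hc
      push_neg at hc
      rw [Nat.odd_iff] at hodd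
      rw [Nat.even_iff] at heven
      rcases lt_or_eq_of_le hc with hlt2 | rfl
      · have heq := Nat.find_min hex hlt2
        push_neg at heq
        rw [heq] at hodd
        omega
      · omega
    have hcardU : ((Finset.Icc 1 h).filter (fun d => Odd (a / 2 ^ (h - d))) ∪
              (Finset.Icc 1 h).filter (fun d => Even (b / 2 ^ (h - d)))).card ≤ h - 1 := by
      refine (Finset.card_le_card hU).trans ?_
      rw [Finset.card_erase_of_mem (Finset.mem_Icc.mpr ⟨ht1, hth⟩), Nat.card_Icc]
      omega
    have hcardI : ((Finset.Icc 1 h).filter (fun d => Odd (a / 2 ^ (h - d))) ∩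
              (Finset.Icc 1 h).filter (fun d => Even (b / 2 ^ (h - d)))).card ≤ h - 1 := by
      refine (Finset.card_le_card hI).trans ?_
      rw [Nat.card_Ioc]
      omega
    have hsum := Finset.card_union_add_card_inter
      ((Finset.Icc 1 h).filter (fun d => Odd (a / 2 ^ (h - d))))
      ((Finset.Icc 1 h).filter (fun d => Even (b / 2 ^ (h - d))))
    omega

theorem contiguous_quote_bound (n a b : ℕ) (hn : 2 < n) (hab : a ≤ b) (hb : b < n) :
    (heapVerPath n (Finset.Icc a b)).card ≤ 2 * Nat.clog 2 n - 2 := by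
  have hh2 : 2 ≤ Nat.clog 2 n := by
    by_contra hc
    push_neg at hc
    have h1 : n ≤ 2 ^ 1 := (Nat.clog_le_iff_le_pow one_lt_two).mp (by omega)
    simp at h1
    omega
  have hb2 : b < 2 ^ Nat.clog 2 n := lt_of_lt_of_le hb (Nat.le_pow_clog one_lt_two n)
  have hsub : heapVerPath n (Finset.Icc a b) ⊆
      ((Finset.Icc 1 (Nat.clog 2 n)).filter
          (fun d => Odd (a / 2 ^ (Nat.clog 2 n - d)))).image
        (fun d => (d, (a / 2 ^ (Nat.clog 2 n - d)) ^^^ 1)) ∪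
      ((Finset.Icc 1 (Nat.clog 2 n)).filter
          (fun d => Even (b / 2 ^ (Nat.clog 2 n - d)))).image
        (fun d => (d, (b / 2 ^ (Nat.clog 2 n - d)) ^^^ 1)) := by
    intro p hp
    obtain ⟨d, i⟩ := p
    simp only [heapVerPath, Finset.mem_filter, Finset.mem_product, Finset.mem_Icc,
      Finset.mem_range] at hp
    obtain ⟨⟨⟨hd1, hdh⟩, -⟩, -, -, hC2, hC3⟩ := hp
    rcases mem_cover (Nat.clog 2 n) a b hab hC2 hC3 with ⟨hodd, hieq⟩ | ⟨heven, hieq⟩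
    · apply Finset.mem_union_left
      apply Finset.mem_image.mpr
      exact ⟨d, Finset.mem_filter.mpr ⟨Finset.mem_Icc.mpr ⟨hd1, hdh⟩, hodd⟩, by rw [hieq]⟩
    · apply Finset.mem_union_right
      apply Finset.mem_image.mpr
      exact ⟨d, Finset.mem_filter.mpr ⟨Finset.mem_Icc.mpr ⟨hd1, hdh⟩, heven⟩, by rw [hieq]⟩
  calc (heapVerPath n (Finset.Icc a b)).card
      ≤ _ := Finset.card_le_card hsub
    _ ≤ _ := Finset.card_union_le _ _
    _ ≤ ((Finset.Icc 1 (Nat.clog 2 n)).filter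
            (fun d => Odd (a / 2 ^ (Nat.clog 2 n - d)))).card +
          ((Finset.Icc 1 (Nat.clog 2 n)).filter
            (fun d => Even (b / 2 ^ (Nat.clog 2 n - d)))).card :=
        Nat.add_le_add Finset.card_image_le Finset.card_image_le
    _ ≤ 2 * Nat.clog 2 n - 2 := count_bound _ a b hh2 hab hb2
end

section
/- In a full binary tree with n = 2^h leaves, for any nonempty set S of t quoted leaves, the number of verification-path nodes is at most t*(h - ⌈log₂ t⌉) + 2^⌈log₂ t⌉ - t. -/
/-- The verification path of a quoted leaf set `S` in a full binary tree of height `h`: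
nodes `(d, i)` whose subtree misses `S` but whose sibling's subtree meets `S`. -/
def verPath (h : ℕ) (S : Finset ℕ) : Finset (ℕ × ℕ) :=
  (Finset.Icc 1 h ×ˢ Finset.range (2 ^ h)).filter
    (fun p => p.2 < 2 ^ p.1 ∧ leafSet h p.1 p.2 ∩ S = ∅ ∧
      (leafSet h p.1 (p.2 ^^^ 1) ∩ S).Nonempty)

/-- Nodes at depth `d` whose subtree meets `S`. -/
def Mset (h : ℕ) (S : Finset ℕ) (d : ℕ) : Finset ℕ :=
  (Finset.range (2^d)).filter (fun i => (leafSet h d i ∩ S).Nonempty)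

/-- Verification-path nodes at depth `d`. -/
def Vset (h : ℕ) (S : Finset ℕ) (d : ℕ) : Finset ℕ :=
  (Finset.range (2^d)).filter
    (fun i => leafSet h d i ∩ S = ∅ ∧ (leafSet h d (i ^^^ 1) ∩ S).Nonempty)

theorem xor1_even_s8 (j : ℕ) : (2*j) ^^^ 1 = 2*j+1 := by
  apply Nat.eq_of_testBit_eq
  intro k
  rw [Nat.testBit_xor]
  rcases k with _ | k
  · simp [Nat.mul_comm]
  · simp [Nat.testBit_succ, Nat.mul_add_div, Nat.mul_div_cancel_left]

theorem xor1_odd_s8 (j : ℕ) : (2*j+1) ^^^ 1 = 2*j := by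
  apply Nat.eq_of_testBit_eq
  intro k
  rw [Nat.testBit_xor]
  rcases k with _ | k
  · simp [Nat.mul_comm]
  · simp [Nat.testBit_succ, Nat.mul_add_div, Nat.mul_div_cancel_left]

theorem leafSet_split (h : ℕ) {d : ℕ} (hd : d < h) (j : ℕ) :
    leafSet h (d+1) (2*j) ∪ leafSet h (d+1) (2*j+1) = leafSet h d j := by
  obtain ⟨k, hk⟩ : ∃ k, h - d = k + 1 := ⟨h - d - 1, by omega⟩
  have hk1 : h - (d+1) = k := by omega
  simp only [leafSet, hk, hk1]
  rw [Finset.Ico_union_Ico_eq_Ico (Nat.mul_le_mul_right _ (by omega))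
    (Nat.mul_le_mul_right _ (by omega))]
  congr 1 <;> ring

theorem meet_iff (h : ℕ) (S : Finset ℕ) {d : ℕ} (hd : d < h) (j : ℕ) :
    ((leafSet h (d+1) (2*j) ∩ S).Nonempty ∨ (leafSet h (d+1) (2*j+1) ∩ S).Nonempty) ↔
      (leafSet h d j ∩ S).Nonempty := by
  rw [← leafSet_split h hd j, Finset.union_inter_distrib_right]
  constructor
  · rintro (⟨x, hx⟩ | ⟨x, hx⟩)
    exacts [⟨x, Finset.mem_union_left _ hx⟩, ⟨x, Finset.mem_union_right _ hx⟩]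
  · rintro ⟨x, hx⟩
    rcases Finset.mem_union.mp hx with h' | h'
    exacts [Or.inl ⟨x, h'⟩, Or.inr ⟨x, h'⟩]

theorem step (h : ℕ) (S : Finset ℕ) {d : ℕ} (hd : d < h) :
    (Vset h S (d+1)).card + (Mset h S (d+1)).card = 2 * (Mset h S d).card := by
  have h2 : (2:ℕ)^(d+1) = 2 * 2^d := by ring
  have hdisj : Disjoint (Vset h S (d+1)) (Mset h S (d+1)) := by
    rw [Finset.disjoint_left]
    intro i hiV hiM
    simp only [Vset, Mset, Finset.mem_filter] at hiV hiM
    rw [hiV.2.1] at hiM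
    exact absurd hiM.2 (by simp)
  have hunion : Vset h S (d+1) ∪ Mset h S (d+1)
      = (Mset h S d).biUnion (fun j => ({2*j, 2*j+1} : Finset ℕ)) := by
    ext i
    simp only [Vset, Mset, Finset.mem_union, Finset.mem_filter, Finset.mem_biUnion,
      Finset.mem_range, Finset.mem_insert, Finset.mem_singleton]
    constructor
    · rintro (⟨hi, hie, hne⟩ | ⟨hi, hne⟩)
      · obtain ⟨j, (rfl | rfl)⟩ : ∃ j, i = 2*j ∨ i = 2*j+1 := ⟨i/2, by omega⟩
        · refine ⟨j, ⟨by omega, (meet_iff h S hd j).mp (Or.inr ?_)⟩, Or.inl rfl⟩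
          rwa [xor1_even_s8] at hne
        · refine ⟨j, ⟨by omega, (meet_iff h S hd j).mp (Or.inl ?_)⟩, Or.inr rfl⟩
          rwa [xor1_odd_s8] at hne
      · obtain ⟨j, (rfl | rfl)⟩ : ∃ j, i = 2*j ∨ i = 2*j+1 := ⟨i/2, by omega⟩
        · exact ⟨j, ⟨by omega, (meet_iff h S hd j).mp (Or.inl hne)⟩, Or.inl rfl⟩
        · exact ⟨j, ⟨by omega, (meet_iff h S hd j).mp (Or.inr hne)⟩, Or.inr rfl⟩
    · rintro ⟨j, ⟨hj, hne⟩, hi⟩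
      have hi2 : i < 2^(d+1) := by rcases hi with rfl | rfl <;> omega
      by_cases hc : (leafSet h (d+1) i ∩ S).Nonempty
      · exact Or.inr ⟨hi2, hc⟩
      · refine Or.inl ⟨hi2, Finset.not_nonempty_iff_eq_empty.mp hc, ?_⟩
        have hor := (meet_iff h S hd j).mpr hne
        rcases hi with rfl | rfl
        · rcases hor with h' | h'
          · exact absurd h' hc
          · rwa [xor1_even_s8]
        · rcases hor with h' | h'
          · rwa [xor1_odd_s8]
          · exact absurd h' hc
  calc (Vset h S (d+1)).card + (Mset h S (d+1)).card
      = (Vset h S (d+1) ∪ Mset h S (d+1)).card := (Finset.card_union_of_disjoint hdisj).symm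
    _ = ∑ j ∈ Mset h S d, ({2*j, 2*j+1} : Finset ℕ).card := by
        rw [hunion]
        apply Finset.card_biUnion
        intro x _ y _ hxy
        rw [Function.onFun, Finset.disjoint_left]
        intro a ha hb
        simp only [Finset.mem_insert, Finset.mem_singleton] at ha hb
        rcases ha with rfl | rfl <;> rcases hb with h' | h' <;> omega
    _ = ∑ _j ∈ Mset h S d, 2 := by
        refine Finset.sum_congr rfl fun j _ => ?_
        rw [Finset.card_pair (by omega)]
    _ = 2 * (Mset h S d).card := by rw [Finset.sum_const, smul_eq_mul, Nat.mul_comm]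

theorem Mset_zero (h : ℕ) (S : Finset ℕ) (hS : S.Nonempty) (hsub : S ⊆ Finset.range (2 ^ h)) :
    (Mset h S 0).card = 1 := by
  have : Mset h S 0 = {0} := by
    rw [Mset]
    rw [pow_zero]
    rw [Finset.range_one]
    rw [Finset.filter_singleton, if_pos]
    have : leafSet h 0 0 ∩ S = S := by
      apply Finset.inter_eq_right.mpr
      intro x hx
      simp only [leafSet, Finset.mem_Ico, Nat.sub_zero]
      have := hsub hx
      simp only [Finset.mem_range] at this
      omega
    rw [this]; exact hS
  rw [this, Finset.card_singleton]

theorem Mset_last (h : ℕ) (S : Finset ℕ) (hsub : S ⊆ Finset.range (2 ^ h)) :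
    Mset h S h = S := by
  ext i
  have hleaf : leafSet h h i = {i} := by
    simp [leafSet, Nat.sub_self]
  simp only [Mset, Finset.mem_filter, Finset.mem_range, hleaf]
  constructor
  · rintro ⟨_, x, hx⟩
    simp only [Finset.mem_inter, Finset.mem_singleton] at hx
    rcases hx with ⟨rfl, hx⟩
    exact hx
  · intro hi
    refine ⟨by have := hsub hi; simpa using this, ⟨i, ?_⟩⟩
    simp [hi]

theorem Mset_le_pow (h : ℕ) (S : Finset ℕ) (d : ℕ) : (Mset h S d).card ≤ 2^d := by
  calc (Mset h S d).card ≤ (Finset.range (2^d)).card := Finset.card_filter_le _ _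
    _ = 2^d := Finset.card_range _

theorem Mset_le_card (h : ℕ) (S : Finset ℕ) (d : ℕ) : (Mset h S d).card ≤ S.card := by
  classical
  apply Finset.card_le_card_of_injOn
    (fun j => if hj : (leafSet h d j ∩ S).Nonempty then hj.choose else 0)
  · intro j hj
    simp only [Finset.mem_coe, Mset, Finset.mem_filter] at hj
    simp only [Finset.mem_coe]
    rw [dif_pos hj.2]
    have := hj.2.choose_spec
    exact (Finset.mem_inter.mp this).2
  · intro j hj j' hj' heq
    simp only [Finset.mem_coe, Mset, Finset.mem_filter] at hj hj'
    simp only at heq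
    rw [dif_pos hj.2, dif_pos hj'.2] at heq
    have m1 := (Finset.mem_inter.mp hj.2.choose_spec).1
    have m2 := (Finset.mem_inter.mp hj'.2.choose_spec).1
    rw [heq] at m1
    simp only [leafSet, Finset.mem_Ico] at m1 m2
    by_contra hne
    rcases Nat.lt_or_ge j j' with hlt | hge
    · have : (j+1) * 2^(h-d) ≤ j' * 2^(h-d) := Nat.mul_le_mul_right _ (by omega)
      omega
    · have hlt : j' < j := by omega
      have : (j'+1) * 2^(h-d) ≤ j * 2^(h-d) := Nat.mul_le_mul_right _ (by omega)
      omega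

theorem verPath_card (h : ℕ) (S : Finset ℕ) :
    (verPath h S).card = ∑ d ∈ Finset.Icc 1 h, (Vset h S d).card := by
  rw [Finset.card_eq_sum_card_fiberwise (f := Prod.fst) (t := Finset.Icc 1 h)
    (fun p hp => by
      simp only [Finset.mem_coe, verPath, Finset.mem_filter, Finset.mem_product] at hp
      exact hp.1.1)]
  refine Finset.sum_congr rfl fun d hd => ?_
  simp only [Finset.mem_Icc] at hd
  apply Finset.card_bij (fun p _ => p.2)
  · intro p hp
    simp only [Finset.mem_filter, verPath, Finset.mem_product] at hp
    obtain ⟨⟨⟨_, _⟩, hlt, he, hne⟩, hfst⟩ := hp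
    simp only [Vset, Finset.mem_filter, Finset.mem_range]
    rw [hfst] at hlt he hne
    exact ⟨hlt, he, hne⟩
  · intro p hp q hq hpq
    simp only [Finset.mem_filter] at hp hq
    exact Prod.ext (hp.2.trans hq.2.symm) hpq
  · intro i hi
    simp only [Vset, Finset.mem_filter, Finset.mem_range] at hi
    refine ⟨(d, i), ?_, rfl⟩
    simp only [Finset.mem_filter, verPath, Finset.mem_product, Finset.mem_Icc,
      Finset.mem_range]
    refine ⟨⟨⟨⟨hd.1, hd.2⟩, ?_⟩, hi.1, hi.2.1, hi.2.2⟩, trivial⟩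
    calc i < 2^d := hi.1
      _ ≤ 2^h := Nat.pow_le_pow_right (by norm_num) hd.2

theorem sum_range_pow2 (c : ℕ) : ∑ i ∈ Finset.range c, 2^i = 2^c - 1 := by
  induction c with
  | zero => simp
  | succ n ih =>
    rw [Finset.sum_range_succ, ih]
    have : 1 ≤ 2^n := Nat.one_le_two_pow
    have : (2:ℕ)^(n+1) = 2 * 2^n := by ring
    omega

theorem arbitrary_quote_verpath_bound (h : ℕ) (S : Finset ℕ) (hS : S.Nonempty)
    (hsub : S ⊆ Finset.range (2 ^ h)) :
    (verPath h S).card ≤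
      S.card * (h - Nat.clog 2 S.card) + 2 ^ Nat.clog 2 S.card - S.card := by
  set t := S.card with ht
  set c := Nat.clog 2 t with hc
  have htpos : 1 ≤ t := hS.card_pos
  have ht2h : t ≤ 2^h := by
    calc t ≤ (Finset.range (2^h)).card := Finset.card_le_card hsub
      _ = 2^h := Finset.card_range _
  have hch : c ≤ h := by
    calc c ≤ Nat.clog 2 (2^h) := Nat.clog_mono_right 2 ht2h
      _ = h := Nat.clog_pow 2 h (by norm_num)
  have htc : t ≤ 2^c := Nat.le_pow_clog (by norm_num) t
  -- rewrite verPath card as sum over range h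
  have hVsum : (verPath h S).card = ∑ d ∈ Finset.range h, (Vset h S (d+1)).card := by
    rw [verPath_card, ← Finset.Ico_add_one_right_eq_Icc, Finset.sum_Ico_eq_sum_range]
    simp [Nat.add_comm]
  -- key identity
  have hkey : (verPath h S).card + ∑ d ∈ Finset.range h, (Mset h S (d+1)).card
      = 2 * ∑ d ∈ Finset.range h, (Mset h S d).card := by
    rw [hVsum, ← Finset.sum_add_distrib, Finset.mul_sum]
    refine Finset.sum_congr rfl fun d hd => ?_
    exact step h S (Finset.mem_range.mp hd)
  have hshift : ∑ d ∈ Finset.range h, (Mset h S (d+1)).card + (Mset h S 0).card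
      = ∑ d ∈ Finset.range h, (Mset h S d).card + (Mset h S h).card := by
    rw [← Finset.sum_range_succ' (fun d => (Mset h S d).card) h, Finset.sum_range_succ]
  have hm0 : (Mset h S 0).card = 1 := Mset_zero h S hS hsub
  have hmh : (Mset h S h).card = t := by rw [Mset_last h S hsub]
  have hid : (verPath h S).card + t = (∑ d ∈ Finset.range h, (Mset h S d).card) + 1 := by
    omega
  -- bound the middle sum
  have hbound : ∑ d ∈ Finset.range h, (Mset h S d).card ≤ 2^c - 1 + t * (h - c) := by
    have hmono : ∀ d ∈ Finset.range h, (Mset h S d).card ≤ min (2^d) t :=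
      fun d _ => le_min (Mset_le_pow h S d) (Mset_le_card h S d)
    calc ∑ d ∈ Finset.range h, (Mset h S d).card
        ≤ ∑ d ∈ Finset.range h, min (2^d) t := Finset.sum_le_sum hmono
      _ = ∑ d ∈ Finset.Ico 0 c, min (2^d) t + ∑ d ∈ Finset.Ico c h, min (2^d) t := by
          rw [Finset.sum_Ico_consecutive _ (Nat.zero_le c) hch, Finset.range_eq_Ico]
      _ ≤ ∑ d ∈ Finset.Ico 0 c, 2^d + ∑ d ∈ Finset.Ico c h, t := by
          gcongr with d hd
          · exact min_le_left _ _
          · exact min_le_right _ _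
      _ = (2^c - 1) + t * (h - c) := by
          rw [← Finset.range_eq_Ico, sum_range_pow2, Finset.sum_const, Nat.card_Ico,
            smul_eq_mul, Nat.mul_comm]
  have h1 : 1 ≤ 2^c := Nat.one_le_two_pow
  omega
end

section
/- For n ≥ 4 a power of two and 2 ≤ t ≤ n/2, the worst-case arbitrary-quote verification-path bound t*(log₂ n - ⌈log₂ t⌉) + 2^⌈log₂ t⌉ - t is at least the contiguous-quote bound 2*log₂ n - 2. -/
lemma two_mul_le_two_pow_aux {m : ℕ} (hm : 1 ≤ m) : 2 * m ≤ 2 ^ m := by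
  induction m with
  | zero => omega
  | succ n ih =>
    rcases Nat.eq_zero_or_pos n with h | h
    · subst h; norm_num
    · have h2 : 2 ^ 1 ≤ 2 ^ n := Nat.pow_le_pow_right (by norm_num) h
      have := ih h
      rw [pow_succ]
      simp only [pow_one] at h2
      omega

theorem arbitrary_bound_ge_contiguous_bound (n h t : ℕ) (hn : n = 2 ^ h) (h4 : 4 ≤ n)
    (ht2 : 2 ≤ t) (htn : t ≤ n / 2) :
    2 * h - 2 ≤ t * (h - Nat.clog 2 t) + 2 ^ Nat.clog 2 t - t := by
  set k := Nat.clog 2 t with hk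
  have hh2 : 2 ≤ h := by
    by_contra hc
    push_neg at hc
    interval_cases h <;> omega
  have hpowsplit : 2 ^ h = 2 * 2 ^ (h - 1) := by
    rw [← pow_succ']
    congr 1
    omega
  have htpow : t ≤ 2 ^ (h - 1) := by
    subst hn
    rw [hpowsplit] at htn
    omega
  have hkle : k ≤ h - 1 := by
    calc k ≤ Nat.clog 2 (2 ^ (h - 1)) := Nat.clog_mono_right 2 htpow
    _ = h - 1 := Nat.clog_pow 2 _ (by norm_num)
  have htk : t ≤ 2 ^ k := Nat.le_pow_clog (by norm_num) t
  have hlow : 2 ^ (k - 1) < t := Nat.pow_pred_clog_lt_self (by norm_num) (by omega)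
  have hk1 : 1 ≤ k := Nat.clog_pos (by norm_num) (by omega)
  have main : 2 * h - 2 + t ≤ t * (h - k) + 2 ^ k := by
    rcases eq_or_lt_of_le hkle with heq | hlt
    · -- k = h - 1
      have hhk : h - k = 1 := by omega
      rw [hhk, mul_one]
      have := two_mul_le_two_pow_aux (m := h - 1) (by omega)
      rw [heq]
      omega
    · -- k ≤ h - 2
      rcases eq_or_lt_of_le hk1 with hk1e | hk2
      · -- k = 1, so t = 2
        have ht : t = 2 := by
          have : t ≤ 2 ^ k := htk
          rw [← hk1e] at this
          omega
        rw [ht, ← hk1e]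
        have hhk : h - 1 = (h - 2) + 1 := by omega
        omega
      · -- 2 ≤ k, k ≤ h - 2
        have ht3 : 3 ≤ t := by
          have : 2 ≤ 2 ^ (k - 1) := by
            calc 2 = 2 ^ 1 := by norm_num
            _ ≤ 2 ^ (k - 1) := Nat.pow_le_pow_right (by norm_num) (by omega)
          omega
        set d := h - k - 1 with hd
        have hd1 : 1 ≤ d := by omega
        have hsplit : t * (h - k) = t * d + t := by
          have : h - k = d + 1 := by omega
          rw [this, Nat.mul_succ]
        have h3d : 3 * d ≤ t * d := Nat.mul_le_mul_right d ht3
        have hpk : 2 * k ≤ 2 ^ k := two_mul_le_two_pow_aux (by omega)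
        omega
  omega
end

section
/- The function t ↦ t*(h - ⌈log₂ t⌉) + 2^⌈log₂ t⌉ - t on {1, ..., 2^h} (h ≥ 1) is monotonically nondecreasing for t ≤ 2^(h-1). -/
lemma bound_step (h t : ℕ) (ht : 1 ≤ t) (hh : 1 ≤ h) (hb : t + 1 ≤ 2 ^ (h - 1)) :
    t * (h - Nat.clog 2 t) + 2 ^ Nat.clog 2 t - t ≤
      (t + 1) * (h - Nat.clog 2 (t + 1)) + 2 ^ Nat.clog 2 (t + 1) - (t + 1) := by
  set c := Nat.clog 2 t with hc
  set c' := Nat.clog 2 (t + 1) with hc'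
  have hcc' : c ≤ c' := Nat.clog_mono_right 2 (by omega)
  have hc'h : c' ≤ h - 1 := by
    calc c' ≤ Nat.clog 2 (2 ^ (h - 1)) := Nat.clog_mono_right 2 hb
    _ = h - 1 := Nat.clog_pow 2 _ one_lt_two
  have hle : t ≤ 2 ^ c := Nat.le_pow_clog one_lt_two t
  have hle' : t + 1 ≤ 2 ^ c' := Nat.le_pow_clog one_lt_two (t + 1)
  by_cases hcase : t + 1 ≤ 2 ^ c
  · -- clog stays the same
    have hc'c : c' ≤ c := (Nat.clog_le_iff_le_pow one_lt_two).mpr hcase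
    have heq : c' = c := le_antisymm hc'c hcc'
    rw [heq]
    have hd : 1 ≤ h - c := by omega
    have e1 : (t + 1) * (h - c) = t * (h - c) + (h - c) := by ring
    have e2 : t ≤ t * (h - c) := Nat.le_mul_of_pos_right t (by omega)
    omega
  · -- t = 2^c and clog goes up by one
    have hteq : t = 2 ^ c := by omega
    have h1 : c + 1 ≤ c' := by
      by_contra hcon
      have : c' ≤ c := by omega
      have := Nat.pow_le_pow_right (by norm_num : 1 ≤ 2) this
      omega
    have h2 : c' ≤ c + 1 := by
      apply (Nat.clog_le_iff_le_pow one_lt_two).mpr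
      have : 2 ^ c + 1 ≤ 2 ^ (c + 1) := by
        have : 1 ≤ 2 ^ c := Nat.one_le_two_pow
        rw [pow_succ]; omega
      omega
    have hc'eq : c' = c + 1 := le_antisymm h2 h1
    rw [hc'eq, hteq]
    have hE : 1 ≤ 2 ^ c := Nat.one_le_two_pow
    have he : 1 ≤ h - (c + 1) := by omega
    have hd : h - c = (h - (c + 1)) + 1 := by omega
    set E := 2 ^ c
    set e := h - (c + 1)
    have e1 : (E + 1) * e = E * e + e := by ring
    have e2 : E * (h - c) = E * e + E := by rw [hd]; ring
    have e3 : 2 ^ (c + 1) = 2 * E := by rw [pow_succ]; ring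
    omega

theorem bound_monotone (h t₁ t₂ : ℕ) (hh : 1 ≤ h) (h1 : 1 ≤ t₁) (h12 : t₁ ≤ t₂)
    (h2 : t₂ ≤ 2 ^ (h - 1)) :
    t₁ * (h - Nat.clog 2 t₁) + 2 ^ Nat.clog 2 t₁ - t₁ ≤
      t₂ * (h - Nat.clog 2 t₂) + 2 ^ Nat.clog 2 t₂ - t₂ := by
  induction t₂, h12 using Nat.le_induction with
  | base => exact le_refl _
  | succ n hn ih =>
    have hnb : n ≤ 2 ^ (h - 1) := by omega
    exact le_trans (ih hnb) (bound_step h n (by omega) hh h2)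
end

section
/- For any n ≥ 1 and any quoted-leaf set of size t in a heap-shaped binary tree on n leaves, the verification-path size is at most t*(⌈log₂ n⌉ - ⌈log₂ t⌉ - 1) + 2^⌈log₂ t⌉ + t, i.e., embedding into a tree on 2^⌈log₂ n⌉ leaves overcounts by at most t hashes. -/
lemma xor_one_eq (m : ℕ) : m ^^^ 1 = if m % 2 = 0 then m + 1 else m - 1 := by
  rcases Nat.even_or_odd m with ⟨k, hk⟩ | ⟨k, hk⟩
  · subst hk
    have h : k + k = Nat.bit false k := by simp [Nat.bit]; omega
    rw [h, show (1:ℕ) = Nat.bit true 0 from rfl, Nat.xor_bit]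
    simp [Nat.bit]
  · subst hk
    have h : 2*k + 1 = Nat.bit true k := by simp [Nat.bit]
    have h2 : (2*k+1) % 2 = 1 := by omega
    rw [h, show (1:ℕ) = Nat.bit true 0 from rfl, Nat.xor_bit]
    simp [Nat.bit, h2]

lemma leafSet_subset_parent {h d i : ℕ} (hd : d + 1 ≤ h) :
    leafSet h (d+1) i ⊆ leafSet h d (i/2) := by
  intro x hx
  simp only [leafSet, Finset.mem_Ico] at *
  have hk : h - d = (h - (d+1)) + 1 := by omega
  rw [hk, pow_succ]
  constructor
  · calc i/2 * (2^(h-(d+1)) * 2) = (2*(i/2)) * 2^(h-(d+1)) := by ring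
    _ ≤ i * 2^(h-(d+1)) := Nat.mul_le_mul_right _ (by omega)
    _ ≤ x := hx.1
  · calc x < (i+1) * 2^(h-(d+1)) := hx.2
    _ ≤ ((i/2+1)*2) * 2^(h-(d+1)) := Nat.mul_le_mul_right _ (by omega)
    _ = (i/2+1) * (2^(h-(d+1)) * 2) := by ring

lemma leafSet_disjoint {h e j j' : ℕ} (hne : j ≠ j') {x : ℕ}
    (h1 : x ∈ leafSet h e j) (h2 : x ∈ leafSet h e j') : False := by
  simp only [leafSet, Finset.mem_Ico] at h1 h2
  rcases lt_or_gt_of_ne hne with hlt | hlt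
  · have := Nat.mul_le_mul_right (2^(h-e)) (show j+1 ≤ j' by omega)
    omega
  · have := Nat.mul_le_mul_right (2^(h-e)) (show j'+1 ≤ j by omega)
    omega

lemma hit_card_le_S (h e : ℕ) (S : Finset ℕ) :
    ((Finset.range (2^e)).filter (fun j => (leafSet h e j ∩ S).Nonempty)).card ≤ S.card := by
  classical
  apply Finset.card_le_card_of_injOn
      (fun j => if hj : (leafSet h e j ∩ S).Nonempty then hj.choose else 0)
  · intro j hj
    rw [Finset.mem_coe, Finset.mem_filter] at hj
    dsimp only
    rw [Finset.mem_coe, dif_pos hj.2]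
    exact (Finset.mem_inter.mp hj.2.choose_spec).2
  · intro j hj j' hj' heq
    simp only [Finset.mem_coe, Finset.mem_filter] at hj hj'
    simp only [dif_pos hj.2, dif_pos hj'.2] at heq
    by_contra hne
    have h1 := (Finset.mem_inter.mp hj.2.choose_spec).1
    have h2 := (Finset.mem_inter.mp hj'.2.choose_spec).1
    rw [heq] at h1
    exact leafSet_disjoint hne h1 h2

theorem heap_verpath_overcount_bound (n : ℕ) (S : Finset ℕ) (hn : 1 ≤ n)
    (hsub : S ⊆ Finset.range n) :
    ((heapVerPath n S).card : ℤ) ≤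
      (S.card : ℤ) * ((Nat.clog 2 n : ℤ) - (Nat.clog 2 S.card : ℤ) - 1) +
        2 ^ Nat.clog 2 S.card + S.card := by
  classical
  set h := Nat.clog 2 n with hh
  set t := S.card with ht
  set c := Nat.clog 2 t with hc
  have htn : t ≤ n := le_trans (Finset.card_le_card hsub) (by simp)
  have hch : c ≤ h := Nat.clog_mono_right 2 htn
  -- fiberwise decomposition over depth
  have hfibmem : ∀ p ∈ heapVerPath n S, p.1 ∈ Finset.Icc 1 h := by
    intro p hp
    simp only [heapVerPath, Finset.mem_filter, Finset.mem_product] at hp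
    exact hp.1.1
  have hcard := Finset.card_eq_sum_card_fiberwise hfibmem
  -- each fiber is bounded by min (2^(d-1)) t
  have hfb : ∀ d ∈ Finset.Icc 1 h,
      ((heapVerPath n S).filter (fun p => p.1 = d)).card ≤ min (2^(d-1)) t := by
    intro d hd
    rw [Finset.mem_Icc] at hd
    have hle : ((heapVerPath n S).filter (fun p => p.1 = d)).card ≤
        ((Finset.range (2^(d-1))).filter (fun j => (leafSet h (d-1) j ∩ S).Nonempty)).card := by
      apply Finset.card_le_card_of_injOn (fun p => p.2 / 2)
      · intro p hp
        simp only [Finset.mem_coe, heapVerPath, Finset.mem_filter, Finset.mem_product, Finset.mem_Icc,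
          Finset.mem_range] at hp
        obtain ⟨⟨⟨⟨hd1, hdh⟩, hi2⟩, hlt, hne, hmiss, hsib⟩, hpd⟩ := hp
        subst hpd
        have hpow : 2^p.1 = 2 * 2^(p.1-1) := by
          have h5 : 2^(p.1-1+1) = 2^(p.1-1)*2 := pow_succ 2 _
          rw [show p.1-1+1 = p.1 from by omega] at h5
          omega
        dsimp only
        rw [Finset.mem_coe, Finset.mem_filter, Finset.mem_range]
        constructor
        · omega
        · obtain ⟨x, hx⟩ := hsib
          rw [Finset.mem_inter] at hx
          have hdiv : (p.2 ^^^ 1) / 2 = p.2 / 2 := by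
            rw [xor_one_eq]
            split <;> omega
          have hsubp : leafSet h p.1 (p.2 ^^^ 1) ⊆ leafSet h (p.1-1) (p.2/2) := by
            have := leafSet_subset_parent (h := h) (d := p.1 - 1) (i := p.2 ^^^ 1) (by omega)
            rw [show p.1 - 1 + 1 = p.1 by omega, hdiv] at this
            exact this
          exact ⟨x, Finset.mem_inter.mpr ⟨hsubp hx.1, hx.2⟩⟩
      · intro p hp q hq heq
        simp only [Finset.mem_coe, heapVerPath, Finset.mem_filter, Finset.mem_product,
          Finset.mem_Icc, Finset.mem_range] at hp hq
        obtain ⟨⟨⟨⟨hd1, hdh⟩, hi2⟩, hlt, hne, hmiss, hsib⟩, hpd⟩ := hp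
        obtain ⟨⟨⟨⟨hd1', hdh'⟩, hi2'⟩, hlt', hne', hmiss', hsib'⟩, hqd⟩ := hq
        by_contra hneq
        have hfst : p.1 = q.1 := by rw [hpd, hqd]
        have hsnd : p.2 ≠ q.2 := by
          intro hs
          exact hneq (Prod.ext hfst hs)
        have hdd : p.2 / 2 = q.2 / 2 := heq
        have hqx : q.2 ^^^ 1 = p.2 := by
          rw [xor_one_eq]
          split <;> omega
        obtain ⟨x, hx⟩ := hsib'
        rw [hqx, ← hfst] at hx
        rw [Finset.mem_inter] at hx
        have : x ∈ (∅ : Finset ℕ) := by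
          rw [← hmiss]
          exact Finset.mem_inter.mpr hx
        simp at this
    refine le_min (le_trans hle ?_) (le_trans hle (hit_card_le_S h (d-1) S))
    calc ((Finset.range (2^(d-1))).filter _).card ≤ (Finset.range (2^(d-1))).card :=
          Finset.card_filter_le _ _
      _ = 2^(d-1) := Finset.card_range _
  -- sum the fiber bounds
  have hsum : (heapVerPath n S).card ≤ ∑ d ∈ Finset.Icc 1 h, min (2^(d-1)) t := by
    rw [hcard]
    exact Finset.sum_le_sum hfb
  have hsplit : Finset.Icc 1 h = Finset.Icc 1 c ∪ Finset.Icc (c+1) h := by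
    ext x
    simp only [Finset.mem_Icc, Finset.mem_union]
    omega
  have hdisj : Disjoint (Finset.Icc 1 c) (Finset.Icc (c+1) h) := by
    rw [Finset.disjoint_left]
    intro a ha hb
    rw [Finset.mem_Icc] at ha hb
    omega
  have h1 : ∑ d ∈ Finset.Icc 1 c, min (2^(d-1)) t ≤ 2^c - 1 := by
    calc ∑ d ∈ Finset.Icc 1 c, min (2^(d-1)) t ≤ ∑ d ∈ Finset.Icc 1 c, 2^(d-1) :=
          Finset.sum_le_sum (fun d _ => min_le_left _ _)
      _ = ∑ j ∈ Finset.range c, 2^j := by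
          rw [show Finset.Icc 1 c = Finset.Ico 1 (c+1) by rw [Finset.Ico_add_one_right_eq_Icc],
            Finset.sum_Ico_eq_sum_range]
          simp
      _ = 2^c - 1 := by
          rw [Nat.geomSum_eq le_rfl]
          simp
  have h2 : ∑ d ∈ Finset.Icc (c+1) h, min (2^(d-1)) t ≤ (h - c) * t := by
    calc ∑ d ∈ Finset.Icc (c+1) h, min (2^(d-1)) t ≤ ∑ d ∈ Finset.Icc (c+1) h, t :=
          Finset.sum_le_sum (fun d _ => min_le_right _ _)
      _ = (h - c) * t := by
          rw [Finset.sum_const, smul_eq_mul, Nat.card_Icc]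
          congr 1
          omega
  have htotal : (heapVerPath n S).card ≤ 2^c - 1 + (h - c) * t := by
    rw [hsplit, Finset.sum_union hdisj] at hsum
    omega
  have hc1 : (1:ℕ) ≤ 2^c := Nat.one_le_two_pow
  have hcast : ((heapVerPath n S).card : ℤ) ≤ (2:ℤ)^c - 1 + ((h:ℤ) - c) * t := by
    have := htotal
    zify [hc1, hch] at this
    linarith
  have : (t:ℤ) * ((h:ℤ) - (c:ℤ) - 1) + 2^c + t = ((h:ℤ) - c) * t + 2^c := by ring
  rw [this]
  linarith
end

section
/- In a full binary tree of height h with quoted leaf set S of size t, if the multiset of heights of trees in the forest of independent trees for S contains two heights differing by at least 2, then S does not maximize the verification-path size among all leaf sets of size t. -/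
/-- The depth of the root of the independent tree of the quoted leaf `x`: the least depth
`d` such that the subtree of the depth-`d` ancestor of `x` contains no quoted leaf other
than `x`. -/
noncomputable def indepDepth (h : ℕ) (S : Finset ℕ) (x : ℕ) : ℕ :=
  sInf {d | leafSet h d (x / 2 ^ (h - d)) ∩ S ⊆ {x}}

/-- The height of the independent tree of the quoted leaf `x`. -/
noncomputable def indepHeight (h : ℕ) (S : Finset ℕ) (x : ℕ) : ℕ := h - indepDepth h S x

namespace UFN

lemma xor_even (j : ℕ) : (2*j) ^^^ 1 = 2*j+1 := by
  have := Nat.xor_bit false j true 0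
  simpa [Nat.bit] using this

lemma xor_odd (j : ℕ) : (2*j+1) ^^^ 1 = 2*j := by
  have := Nat.xor_bit true j true 0
  simpa [Nat.bit] using this

lemma xor_one_cases (i : ℕ) : (i % 2 = 0 ∧ i ^^^ 1 = i + 1) ∨ (i % 2 = 1 ∧ i ^^^ 1 = i - 1) := by
  rcases Nat.even_or_odd i with ⟨j, hj⟩ | ⟨j, hj⟩
  · have h2 : i = 2 * j := by omega
    subst h2
    exact Or.inl ⟨by omega, xor_even j⟩
  · have h2 : i = 2 * j + 1 := by omega
    subst h2
    exact Or.inr ⟨by omega, by rw [xor_odd]; omega⟩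

lemma div_two_eq_iff (n i : ℕ) : n / 2 = i / 2 ↔ n = i ∨ n = i ^^^ 1 := by
  rcases xor_one_cases i with ⟨h1, h2⟩ | ⟨h1, h2⟩ <;> omega

lemma xor_one_ne (i : ℕ) : i ^^^ 1 ≠ i := by
  rcases xor_one_cases i with ⟨h1, h2⟩ | ⟨h1, h2⟩ <;> omega

lemma pow_pos' (k : ℕ) : 0 < 2 ^ k := Nat.pow_pos (by norm_num)

lemma div_eq_iff' (s i k : ℕ) (hk : 0 < k) : s / k = i ↔ i * k ≤ s ∧ s < (i+1) * k := by
  constructor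
  · rintro rfl
    refine ⟨Nat.div_mul_le_self s k, ?_⟩
    have h1 := Nat.div_add_mod s k
    have h2 := Nat.mod_lt s hk
    nlinarith
  · rintro ⟨h1, h2⟩
    exact Nat.div_eq_of_lt_le h1 h2

lemma mem_leafSet {h d i s : ℕ} : s ∈ leafSet h d i ↔ s / 2 ^ (h - d) = i := by
  rw [leafSet, Finset.mem_Ico, div_eq_iff' s i _ (pow_pos' _)]

def meetSet (h : ℕ) (S : Finset ℕ) (d : ℕ) : Finset ℕ :=
  (Finset.range (2^d)).filter (fun i => (leafSet h d i ∩ S).Nonempty)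

def verSet (h : ℕ) (S : Finset ℕ) (d : ℕ) : Finset ℕ :=
  (Finset.range (2^d)).filter
    (fun i => leafSet h d i ∩ S = ∅ ∧ (leafSet h d (i ^^^ 1) ∩ S).Nonempty)

lemma verPath_card (h : ℕ) (S : Finset ℕ) :
    (verPath h S).card = ∑ d ∈ Finset.Icc 1 h, (verSet h S d).card := by
  have hrep : verPath h S
      = (Finset.Icc 1 h).biUnion (fun d => (verSet h S d).image (fun i => (d, i))) := by
    ext ⟨d, i⟩
    simp only [verPath, verSet, Finset.mem_filter, Finset.mem_product, Finset.mem_biUnion,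
      Finset.mem_image, Finset.mem_range, Finset.mem_Icc, Prod.mk.injEq]
    constructor
    · rintro ⟨⟨hd, -⟩, h1, h2, h3⟩
      exact ⟨d, hd, i, ⟨h1, h2, h3⟩, rfl, rfl⟩
    · rintro ⟨d', hd', i', ⟨h1, h2, h3⟩, rfl, rfl⟩
      exact ⟨⟨hd', lt_of_lt_of_le h1 (Nat.pow_le_pow_right (by norm_num) hd'.2)⟩, h1, h2, h3⟩
  rw [hrep, Finset.card_biUnion]
  · exact Finset.sum_congr rfl fun d _ =>
      Finset.card_image_of_injective _ (fun a b hab => by simpa using hab)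
  · intro a _ b _ hab
    simp only [Finset.disjoint_left, Finset.mem_image, Prod.mk.injEq]
    rintro ⟨u, v⟩ ⟨i, -, rfl, rfl⟩ ⟨j, -, rfl, -⟩
    exact hab rfl

lemma inter_nonempty {A S : Finset ℕ} : (A ∩ S).Nonempty ↔ ∃ s ∈ S, s ∈ A := by
  constructor
  · rintro ⟨s, hs⟩
    rw [Finset.mem_inter] at hs
    exact ⟨s, hs.2, hs.1⟩
  · rintro ⟨s, h1, h2⟩
    exact ⟨s, Finset.mem_inter.mpr ⟨h2, h1⟩⟩

lemma leafSet_nonempty_iff {h d i : ℕ} {S : Finset ℕ} :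
    (leafSet h d i ∩ S).Nonempty ↔ ∃ s ∈ S, s / 2 ^ (h - d) = i := by
  simp only [inter_nonempty, mem_leafSet]

lemma recurrence (h : ℕ) (S : Finset ℕ) (d : ℕ) (hd : d + 1 ≤ h) :
    (verSet h S (d+1)).card + (meetSet h S (d+1)).card = 2 * (meetSet h S d).card := by
  have hpow : h - d = (h - (d+1)) + 1 := by omega
  have hdivdiv : ∀ s : ℕ, s / 2 ^ (h - d) = s / 2 ^ (h - (d+1)) / 2 := by
    intro s
    rw [hpow, pow_succ, Nat.div_div_eq_div_mul]
  -- parent condition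
  have key : ∀ i : ℕ, (leafSet h d (i / 2) ∩ S).Nonempty ↔
      ((leafSet h (d+1) i ∩ S).Nonempty ∨ (leafSet h (d+1) (i ^^^ 1) ∩ S).Nonempty) := by
    intro i
    simp only [leafSet_nonempty_iff]
    constructor
    · rintro ⟨s, hs, heq⟩
      rw [hdivdiv, div_two_eq_iff] at heq
      rcases heq with heq | heq
      · exact Or.inl ⟨s, hs, heq⟩
      · exact Or.inr ⟨s, hs, heq⟩
    · rintro (⟨s, hs, heq⟩ | ⟨s, hs, heq⟩)
      · exact ⟨s, hs, by rw [hdivdiv, div_two_eq_iff]; exact Or.inl heq⟩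
      · exact ⟨s, hs, by rw [hdivdiv, div_two_eq_iff]; exact Or.inr heq⟩
  set C : Finset ℕ :=
    (Finset.range (2^(d+1))).filter (fun i => (leafSet h d (i / 2) ∩ S).Nonempty) with hC
  have hunion : C = verSet h S (d+1) ∪ meetSet h S (d+1) := by
    ext i
    simp only [hC, verSet, meetSet, Finset.mem_union, Finset.mem_filter, Finset.mem_range]
    constructor
    · rintro ⟨hi, hne⟩
      rcases (key i).mp hne with hm | hv
      · exact Or.inr ⟨hi, hm⟩
      · rcases Finset.eq_empty_or_nonempty (leafSet h (d+1) i ∩ S) with he | hm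
        · exact Or.inl ⟨hi, he, hv⟩
        · exact Or.inr ⟨hi, hm⟩
    · rintro (⟨hi, -, hv⟩ | ⟨hi, hm⟩)
      · exact ⟨hi, (key i).mpr (Or.inr hv)⟩
      · exact ⟨hi, (key i).mpr (Or.inl hm)⟩
  have hdisj : Disjoint (verSet h S (d+1)) (meetSet h S (d+1)) := by
    simp only [Finset.disjoint_left, verSet, meetSet, Finset.mem_filter]
    rintro i ⟨-, he, -⟩ ⟨-, hm⟩
    rw [he] at hm
    exact Finset.not_nonempty_empty hm
  have hCcard : C.card = 2 * (meetSet h S d).card := by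
    have hCrep : C = (meetSet h S d).biUnion (fun j => {2*j, 2*j+1}) := by
      ext i
      simp only [hC, meetSet, Finset.mem_biUnion, Finset.mem_filter, Finset.mem_range,
        Finset.mem_insert, Finset.mem_singleton]
      constructor
      · rintro ⟨hi, hne⟩
        refine ⟨i / 2, ⟨?_, hne⟩, by omega⟩
        have : 2 ^ (d+1) = 2 * 2 ^ d := by ring
        omega
      · rintro ⟨j, ⟨hj, hne⟩, hij⟩
        have hij2 : i / 2 = j := by omega
        have : 2 ^ (d+1) = 2 * 2 ^ d := by ring
        rw [hij2]
        exact ⟨by omega, hne⟩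
    rw [hCrep, Finset.card_biUnion]
    · rw [Finset.sum_congr rfl fun j _ => show ({2*j, 2*j+1} : Finset ℕ).card = 2 by
        rw [Finset.card_insert_of_notMem (by simp), Finset.card_singleton]]
      rw [Finset.sum_const, smul_eq_mul, mul_comm]
    · intro a _ b _ hab
      simp only [Finset.disjoint_left, Finset.mem_insert, Finset.mem_singleton]
      omega
  rw [← Finset.card_union_of_disjoint hdisj, ← hunion, hCcard]

lemma sum_Icc_one (f : ℕ → ℕ) (h : ℕ) :
    ∑ d ∈ Finset.Icc 1 h, f d = ∑ d ∈ Finset.range h, f (d+1) := by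
  have h1 : Finset.range (h+1) = insert 0 (Finset.Icc 1 h) := by
    ext i
    simp only [Finset.mem_range, Finset.mem_insert, Finset.mem_Icc]
    omega
  have h2 := Finset.sum_range_succ' f h
  rw [h1, Finset.sum_insert (by simp)] at h2
  omega

lemma meet_image {h : ℕ} {S : Finset ℕ} (hsub : S ⊆ Finset.range (2^h)) {d : ℕ} (hd : d ≤ h) :
    meetSet h S d = S.image (fun s => s / 2 ^ (h - d)) := by
  ext i
  simp only [meetSet, Finset.mem_filter, Finset.mem_range, Finset.mem_image,
    leafSet_nonempty_iff]
  constructor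
  · rintro ⟨-, s, hs, heq⟩
    exact ⟨s, hs, heq⟩
  · rintro ⟨s, hs, heq⟩
    have hsr : s < 2 ^ h := Finset.mem_range.mp (hsub hs)
    have hlt : s / 2 ^ (h - d) < 2 ^ d := by
      apply Nat.div_lt_of_lt_mul
      calc s < 2 ^ h := hsr
      _ = 2 ^ (h - d) * 2 ^ d := by rw [← pow_add]; congr 1; omega
    exact ⟨heq ▸ hlt, s, hs, heq⟩

lemma formula {h : ℕ} {S : Finset ℕ} (hsub : S ⊆ Finset.range (2^h)) (hne : S.Nonempty) :
    (verPath h S).card + 2 * S.card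
      = (∑ d ∈ Finset.range (h+1), (S.image (fun s => s / 2 ^ (h - d))).card) + 1 := by
  have hrec : ∑ d ∈ Finset.range h, ((verSet h S (d+1)).card + (meetSet h S (d+1)).card)
      = 2 * ∑ d ∈ Finset.range h, (meetSet h S d).card := by
    rw [Finset.mul_sum]
    exact Finset.sum_congr rfl fun d hd =>
      recurrence h S d (by simpa using Finset.mem_range.mp hd)
  rw [Finset.sum_add_distrib] at hrec
  have hver : (verPath h S).card = ∑ d ∈ Finset.range h, (verSet h S (d+1)).card := by
    rw [verPath_card, sum_Icc_one]
  have hmeet0 : (meetSet h S 0).card = 1 := by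
    rw [meet_image hsub (Nat.zero_le h)]
    have : S.image (fun s => s / 2 ^ (h - 0)) = {0} := by
      rw [show (fun s => s / 2 ^ (h - 0)) = (fun s : ℕ => s / 2 ^ h) by simp]
      rw [Finset.eq_singleton_iff_nonempty_unique_mem]
      refine ⟨hne.image _, ?_⟩
      intro v hv
      simp only [Finset.mem_image] at hv
      obtain ⟨s, hs, rfl⟩ := hv
      exact Nat.div_eq_of_lt (Finset.mem_range.mp (hsub hs))
    rw [this, Finset.card_singleton]
  have hmeeth : (meetSet h S h).card = S.card := by
    rw [meet_image hsub le_rfl]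
    have : S.image (fun s => s / 2 ^ (h - h)) = S := by
      simp [Nat.sub_self]
    rw [this]
  have hsplit1 : ∑ d ∈ Finset.range (h+1), (meetSet h S d).card
      = ∑ d ∈ Finset.range h, (meetSet h S d).card + S.card := by
    rw [Finset.sum_range_succ, hmeeth]
  have hsplit2 : ∑ d ∈ Finset.range (h+1), (meetSet h S d).card
      = ∑ d ∈ Finset.range h, (meetSet h S (d+1)).card + 1 := by
    rw [Finset.sum_range_succ', hmeet0]
  have himg : ∑ d ∈ Finset.range (h+1), (S.image (fun s => s / 2 ^ (h - d))).card
      = ∑ d ∈ Finset.range (h+1), (meetSet h S d).card := by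
    refine Finset.sum_congr rfl fun d hd => ?_
    rw [meet_image hsub (Nat.lt_succ_iff.mp (Finset.mem_range.mp hd))]
  rw [himg, hver]
  omega

lemma top_mem (h : ℕ) (S : Finset ℕ) (x : ℕ) :
    h ∈ {d | leafSet h d (x / 2 ^ (h - d)) ∩ S ⊆ {x}} := by
  intro s hs
  rw [Finset.mem_inter] at hs
  have := mem_leafSet.mp hs.1
  simp only [Nat.sub_self, pow_zero, Nat.div_one] at this
  simp [this]

lemma indepDepth_le (h : ℕ) (S : Finset ℕ) (x : ℕ) : indepDepth h S x ≤ h :=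
  Nat.sInf_le (top_mem h S x)

lemma indepDepth_spec (h : ℕ) (S : Finset ℕ) (x : ℕ) :
    ∀ s ∈ S, s / 2 ^ (h - indepDepth h S x) = x / 2 ^ (h - indepDepth h S x) → s = x := by
  have hmem := Nat.sInf_mem ⟨h, top_mem h S x⟩
  intro s hs heq
  have h1 : s ∈ leafSet h (indepDepth h S x) (x / 2 ^ (h - indepDepth h S x)) :=
    mem_leafSet.mpr heq
  have := hmem (Finset.mem_inter.mpr ⟨h1, hs⟩)
  simpa using this

lemma indepDepth_min (h : ℕ) (S : Finset ℕ) (x : ℕ) {d : ℕ} (hd : d < indepDepth h S x) :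
    ∃ z ∈ S, z ≠ x ∧ z / 2 ^ (h - d) = x / 2 ^ (h - d) := by
  have hnot : d ∉ {d | leafSet h d (x / 2 ^ (h - d)) ∩ S ⊆ {x}} := Nat.notMem_of_lt_sInf hd
  simp only [Set.mem_setOf_eq] at hnot
  rw [Finset.not_subset] at hnot
  obtain ⟨z, hz, hzx⟩ := hnot
  rw [Finset.mem_inter] at hz
  exact ⟨z, hz.2, by simpa using hzx, mem_leafSet.mp hz.1⟩

lemma xor_one_div_two (i : ℕ) : (i ^^^ 1) / 2 = i / 2 := by
  rcases xor_one_cases i with ⟨h1, h2⟩ | ⟨h1, h2⟩ <;> rw [h2] <;> omega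

lemma xor_one_lt {i n : ℕ} (hi : i < 2 * n) : i ^^^ 1 < 2 * n := by
  rcases xor_one_cases i with ⟨h1, h2⟩ | ⟨h1, h2⟩ <;> rw [h2] <;> omega

lemma div_nest (h s : ℕ) {e e' : ℕ} (h1 : e ≤ e') (h2 : e' ≤ h) :
    s / 2 ^ (h - e) = s / 2 ^ (h - e') / 2 ^ (e' - e) := by
  rw [Nat.div_div_eq_div_mul, ← pow_add]
  congr 2
  omega

theorem main (h : ℕ) (S : Finset ℕ)
    (hsub : S ⊆ Finset.range (2 ^ h)) (x y : ℕ) (hx : x ∈ S) (hy : y ∈ S)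
    (hdiff : indepHeight h S y + 2 ≤ indepHeight h S x) :
    ∃ S' : Finset ℕ, S' ⊆ Finset.range (2 ^ h) ∧ S'.card = S.card ∧
      (verPath h S).card < (verPath h S').card := by
  set dx := indepDepth h S x with hdxdef
  set dy := indepDepth h S y with hdydef
  have hdxh : dx ≤ h := indepDepth_le h S x
  have hdyh : dy ≤ h := indepDepth_le h S y
  have hord : dx + 2 ≤ dy := by
    simp only [indepHeight, ← hdxdef, ← hdydef] at hdiff
    omega
  have hdxh2 : dx + 2 ≤ h := by omega
  set k := h - (dx + 1) with hkdef
  set a := x / 2 ^ k with hadef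
  set x' := (a ^^^ 1) * 2 ^ k with hx'def
  have hxy : x ≠ y := by
    intro he
    rw [he] at hdiff
    omega
  have hx'divk : x' / 2 ^ k = a ^^^ 1 := Nat.mul_div_cancel _ (pow_pos' k)
  have hane : a ^^^ 1 ≠ a := xor_one_ne a
  have hdiv2 : (a ^^^ 1) / 2 = a / 2 := xor_one_div_two a
  have hkdx : h - dx = k + 1 := by omega
  have hxdx' : x' / 2 ^ (h - dx) = x / 2 ^ (h - dx) := by
    rw [hkdx, pow_succ, ← Nat.div_div_eq_div_mul, ← Nat.div_div_eq_div_mul, hx'divk, hdiv2]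
  -- spec at depth dx
  have spec_x : ∀ s ∈ S, s / 2 ^ (h - dx) = x / 2 ^ (h - dx) → s = x := indepDepth_spec h S x
  -- freshness of x' below depth dx+1
  have fresh : ∀ e, dx + 1 ≤ e → e ≤ h → ∀ s ∈ S, s / 2 ^ (h - e) ≠ x' / 2 ^ (h - e) := by
    intro e he1 he2 s hs heq
    have hnest_s := div_nest h s (show dx ≤ e by omega) he2
    have hnest_x' := div_nest h x' (show dx ≤ e by omega) he2
    have hsx : s / 2 ^ (h - dx) = x / 2 ^ (h - dx) := by
      rw [hnest_s, heq, ← hnest_x', hxdx']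
    have hsx2 : s = x := spec_x s hs hsx
    subst hsx2
    have hnest_s1 := div_nest h s he1 he2
    have hnest_x'1 := div_nest h x' he1 he2
    have hxk : s / 2 ^ (h - (dx+1)) = x' / 2 ^ (h - (dx+1)) := by
      rw [hnest_s1, heq, ← hnest_x'1]
    rw [show h - (dx+1) = k from rfl, hx'divk, ← hadef] at hxk
    exact hane hxk.symm
  have hx'S : x' ∉ S := by
    intro hc
    exact fresh (dx+1) le_rfl (by omega) x' hc rfl
  have hx'lt : x' < 2 ^ h := by
    have hxlt : x < 2 ^ h := Finset.mem_range.mp (hsub hx)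
    have hpow : 2 ^ h = 2 ^ k * 2 ^ (dx + 1) := by
      rw [← pow_add]
      congr 1
      omega
    have ha : a < 2 ^ (dx + 1) := Nat.div_lt_of_lt_mul (by rw [← hpow]; exact hxlt)
    have ha1 : a ^^^ 1 < 2 ^ (dx + 1) := by
      have h2p : 2 ^ (dx + 1) = 2 * 2 ^ dx := by ring
      rw [h2p]
      exact xor_one_lt (h2p ▸ ha)
    calc x' = (a ^^^ 1) * 2 ^ k := rfl
      _ < 2 ^ (dx + 1) * 2 ^ k := by
          exact Nat.mul_lt_mul_of_lt_of_le ha1 le_rfl (pow_pos' k)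
      _ = 2 ^ h := by rw [← pow_add]; congr 1; omega
  -- the new set
  set S' := insert x' (S.erase y) with hS'def
  have hx'ne : x' ∉ S.erase y := fun hc => hx'S (Finset.mem_of_mem_erase hc)
  have hcard : S'.card = S.card := by
    rw [hS'def, Finset.card_insert_of_notMem hx'ne, Finset.card_erase_of_mem hy]
    have : 0 < S.card := Finset.card_pos.mpr ⟨x, hx⟩
    omega
  have hsub' : S' ⊆ Finset.range (2 ^ h) :=
    Finset.insert_subset (Finset.mem_range.mpr hx'lt) ((Finset.erase_subset _ _).trans hsub)
  -- image facts
  have G1 : ∀ e < dy, (S.erase y).image (fun s => s / 2 ^ (h - e))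
      = S.image (fun s => s / 2 ^ (h - e)) := by
    intro e he
    apply Finset.Subset.antisymm (Finset.image_subset_image (Finset.erase_subset _ _))
    intro v hv
    rw [Finset.mem_image] at hv ⊢
    obtain ⟨s, hs, rfl⟩ := hv
    by_cases hsy : s = y
    · obtain ⟨z, hz, hzy, hzeq⟩ := indepDepth_min h S y he
      exact ⟨z, Finset.mem_erase.mpr ⟨hzy, hz⟩, by rw [hzeq, hsy]⟩
    · exact ⟨s, Finset.mem_erase.mpr ⟨hsy, hs⟩, rfl⟩
  have G2 : ∀ e : ℕ, (S.image (fun s => s / 2 ^ (h - e))).card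
      ≤ ((S.erase y).image (fun s => s / 2 ^ (h - e))).card + 1 := by
    intro e
    have hss : S.image (fun s => s / 2 ^ (h - e))
        ⊆ insert (y / 2 ^ (h - e)) ((S.erase y).image (fun s => s / 2 ^ (h - e))) := by
      intro v hv
      rw [Finset.mem_image] at hv
      obtain ⟨s, hs, rfl⟩ := hv
      by_cases hsy : s = y
      · rw [hsy]; exact Finset.mem_insert_self _ _
      · exact Finset.mem_insert_of_mem
          (Finset.mem_image.mpr ⟨s, Finset.mem_erase.mpr ⟨hsy, hs⟩, rfl⟩)
    calc (S.image (fun s => s / 2 ^ (h - e))).card ≤ _ := Finset.card_le_card hss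
      _ ≤ _ := Finset.card_insert_le _ _
  have hfreshimg : ∀ e, dx + 1 ≤ e → e ≤ h →
      x' / 2 ^ (h - e) ∉ (S.erase y).image (fun s => s / 2 ^ (h - e)) := by
    intro e he1 he2 hc
    rw [Finset.mem_image] at hc
    obtain ⟨s, hs, hseq⟩ := hc
    exact fresh e he1 he2 s (Finset.mem_of_mem_erase hs) hseq
  have hS'img : ∀ e : ℕ, S'.image (fun s => s / 2 ^ (h - e))
      = insert (x' / 2 ^ (h - e)) ((S.erase y).image (fun s => s / 2 ^ (h - e))) := by
    intro e
    rw [hS'def, Finset.image_insert]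
  -- pointwise inequality
  have hle : ∀ e ∈ Finset.range (h+1), (S.image (fun s => s / 2 ^ (h - e))).card
      ≤ (S'.image (fun s => s / 2 ^ (h - e))).card := by
    intro e he
    rw [Finset.mem_range] at he
    by_cases hcase : e ≤ dx
    · apply Finset.card_le_card
      intro v hv
      rw [Finset.mem_image] at hv ⊢
      obtain ⟨s, hs, rfl⟩ := hv
      by_cases hsy : s = y
      · obtain ⟨z, hz, hzy, hzeq⟩ := indepDepth_min h S y (show e < dy by omega)
        refine ⟨z, ?_, by rw [hzeq, hsy]⟩
        exact Finset.mem_insert_of_mem (Finset.mem_erase.mpr ⟨hzy, hz⟩)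
      · exact ⟨s, Finset.mem_insert_of_mem (Finset.mem_erase.mpr ⟨hsy, hs⟩), rfl⟩
    · have he1 : dx + 1 ≤ e := by omega
      have he2 : e ≤ h := by omega
      rw [hS'img e, Finset.card_insert_of_notMem (hfreshimg e he1 he2)]
      exact G2 e
  -- strict inequality at depth dx+1
  have hstrict : (S.image (fun s => s / 2 ^ (h - (dx+1)))).card
      < (S'.image (fun s => s / 2 ^ (h - (dx+1)))).card := by
    rw [hS'img (dx+1), Finset.card_insert_of_notMem (hfreshimg (dx+1) le_rfl (by omega)),
      G1 (dx+1) (by omega)]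
    omega
  have hsum : (∑ d ∈ Finset.range (h+1), (S.image (fun s => s / 2 ^ (h - d))).card)
      < ∑ d ∈ Finset.range (h+1), (S'.image (fun s => s / 2 ^ (h - d))).card :=
    Finset.sum_lt_sum hle ⟨dx+1, Finset.mem_range.mpr (by omega), hstrict⟩
  have hf1 := formula hsub ⟨x, hx⟩
  have hf2 := formula hsub' ⟨x', Finset.mem_insert_self _ _⟩
  exact ⟨S', hsub', hcard, by omega⟩

end UFN

theorem unbalanced_forest_not_maximal (h : ℕ) (S : Finset ℕ)
    (hsub : S ⊆ Finset.range (2 ^ h)) (x y : ℕ) (hx : x ∈ S) (hy : y ∈ S)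
    (hdiff : indepHeight h S y + 2 ≤ indepHeight h S x) :
    ∃ S' : Finset ℕ, S' ⊆ Finset.range (2 ^ h) ∧ S'.card = S.card ∧
      (verPath h S).card < (verPath h S').card := UFN.main h S hsub x y hx hy hdiff
end

section
/- For any h ≥ 1 and any nonempty contiguous quote [i, j] in a full binary tree with 2^h leaves, at each depth d with 2 ≤ d ≤ h, the set of nodes at depth d whose subtrees intersect the quoted interval forms a contiguous interval of nodes at that depth, and at most the two boundary nodes of this interval at depth d-1 require a supplied sibling hash. -/
private lemma two_mul_xor_one (m : ℕ) : (2*m) ^^^ 1 = 2*m + 1 := by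
  apply Nat.eq_of_testBit_eq
  intro i
  cases i with
  | zero => simp [Nat.testBit_xor]
  | succ n =>
    rw [Nat.testBit_xor, Nat.testBit_succ, Nat.testBit_succ, Nat.testBit_succ]
    rw [show (2*m)/2 = m by omega, show (1:ℕ)/2 = 0 by norm_num, show (2*m+1)/2 = m by omega]
    simp

private lemma two_mul_add_one_xor_one (m : ℕ) : (2*m+1) ^^^ 1 = 2*m := by
  apply Nat.eq_of_testBit_eq
  intro i
  cases i with
  | zero => simp [Nat.testBit_xor]; omega
  | succ n =>
    rw [Nat.testBit_xor, Nat.testBit_succ, Nat.testBit_succ, Nat.testBit_succ]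
    rw [show (2*m)/2 = m by omega, show (1:ℕ)/2 = 0 by norm_num, show (2*m+1)/2 = m by omega]
    simp

private lemma xor_one_cases (i : ℕ) : i ^^^ 1 = i + 1 ∨ (i ^^^ 1) + 1 = i := by
  rcases Nat.even_or_odd i with ⟨m, rfl⟩ | ⟨m, rfl⟩
  · left; rw [show m + m = 2*m by ring, two_mul_xor_one]
  · right; rw [two_mul_add_one_xor_one]

private lemma inter_nonempty_iff (e a b k : ℕ) (hab : a ≤ b) :
    (Finset.Ico (k * 2 ^ e) ((k + 1) * 2 ^ e) ∩ Finset.Icc a b).Nonempty ↔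
      a / 2 ^ e ≤ k ∧ k ≤ b / 2 ^ e := by
  have hpos : 0 < 2 ^ e := Nat.pow_pos (by norm_num)
  rw [show Finset.Icc a b = Finset.Ico a (b+1) by rw [Finset.Ico_add_one_right_eq_Icc],
    Finset.Ico_inter_Ico, Finset.nonempty_Ico, lt_min_iff, max_lt_iff, max_lt_iff]
  constructor
  · rintro ⟨⟨-, ha⟩, hk, -⟩
    refine ⟨?_, (Nat.le_div_iff_mul_le hpos).2 (by omega)⟩
    have := (Nat.div_lt_iff_lt_mul hpos).2 ha
    omega
  · rintro ⟨h1, h2⟩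
    have hk : k * 2 ^ e ≤ b := (Nat.le_div_iff_mul_le hpos).1 h2
    have ha2 : a < (k + 1) * 2 ^ e := (Nat.div_lt_iff_lt_mul hpos).1 (by omega)
    have hpk : k * 2 ^ e < (k + 1) * 2 ^ e :=
      (Nat.mul_lt_mul_right hpos).2 (Nat.lt_succ_self k)
    exact ⟨⟨hpk, ha2⟩, by omega, by omega⟩

theorem contiguous_quote_interval_structure (h a b d : ℕ) (hh : 1 ≤ h) (hab : a ≤ b)
    (hb : b < 2 ^ h) (hd2 : 2 ≤ d) (hdh : d ≤ h) :
    (∃ l r : ℕ,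
        (Finset.range (2 ^ d)).filter
            (fun k => (leafSet h d k ∩ Finset.Icc a b).Nonempty) = Finset.Icc l r) ∧
      ((verPath h (Finset.Icc a b)).filter (fun p => p.1 = d)).card ≤ 2 := by
  set e := h - d with he
  set l := a / 2 ^ e with hl
  set r := b / 2 ^ e with hr
  have hpos : 0 < 2 ^ e := Nat.pow_pos (by norm_num)
  have hsplit : 2 ^ h = 2 ^ d * 2 ^ e := by
    rw [← pow_add]; congr 1; omega
  have hrlt : r < 2 ^ d := by
    rw [hr]; exact (Nat.div_lt_iff_lt_mul hpos).2 (by rw [← hsplit]; exact hb)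
  constructor
  · refine ⟨l, r, ?_⟩
    ext k
    rw [Finset.mem_filter, leafSet, ← he]
    simp only [Finset.mem_filter, Finset.mem_range, Finset.mem_Icc, leafSet,
      inter_nonempty_iff e a b k hab, ← hl, ← hr]
    constructor
    · rintro ⟨-, h1, h2⟩; exact ⟨h1, h2⟩
    · rintro ⟨h1, h2⟩; exact ⟨by omega, h1, h2⟩
  · have hsub : (verPath h (Finset.Icc a b)).filter (fun p => p.1 = d) ⊆
        {(d, l ^^^ 1), (d, r ^^^ 1)} := by
      intro p hp
      obtain ⟨p1, i⟩ := p
      simp only [verPath, Finset.mem_filter, Finset.mem_product] at hp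
      obtain ⟨⟨-, hlt, hempty, hne⟩, hpd⟩ := hp
      subst hpd
      have hmiss : ¬ (l ≤ i ∧ i ≤ r) := by
        rw [← inter_nonempty_iff e a b i hab]
        intro hc
        rw [leafSet, ← he] at hempty
        rw [hempty] at hc
        exact Finset.not_nonempty_empty hc
      have hsib : l ≤ i ^^^ 1 ∧ i ^^^ 1 ≤ r := by
        rw [leafSet, ← he] at hne
        exact (inter_nonempty_iff e a b (i ^^^ 1) hab).1 hne
      have hback : (i ^^^ 1) ^^^ 1 = i := by rw [Nat.xor_assoc, Nat.xor_self, Nat.xor_zero]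
      have hcase : i = l ^^^ 1 ∨ i = r ^^^ 1 := by
        rcases xor_one_cases i with hx | hx
        · left
          have hil : i ^^^ 1 = l := by omega
          rw [← hil, hback]
        · right
          have hir : i ^^^ 1 = r := by omega
          rw [← hir, hback]
      simp only [Finset.mem_insert, Finset.mem_singleton]
      rcases hcase with h1 | h1
      · left; rw [h1]
      · right; rw [h1]
    calc ((verPath h (Finset.Icc a b)).filter (fun p => p.1 = d)).card
        ≤ ({(d, l ^^^ 1), (d, r ^^^ 1)} : Finset (ℕ × ℕ)).card := Finset.card_le_card hsub
      _ ≤ 2 := by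
          apply le_trans (Finset.card_insert_le _ _)
          simp
end
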